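/- Let C be a category satisfying the calculus of fractions, and fix an object x. For arrows α₁ : c₁ → x and α₂ : c₂ → x, say (α₁, m₁) ⊂ (α₂, m₂) for data m_i attached to the domains (pulled back functorially along arrows, with pull-back preserving and reflecting a partial order ⊂ on the data) if SOME square filling (β₁, β₂) of (α₁, α₂) satisfies β₁*(m₁) ⊂ β₂*(m₂). Then: (a) if some square filling satisfies this condition, every square filling does; and (b) the relation ⊂ on pairs (α, m) is reflexive and transitive. -/

import Mathlib

/-!
Any two square fillings of a cospan `c₁ ⟶ x ⟵ c₂` have a common refinement: fill the square
formed by their legs into `c₁`, then equalize the two resulting arrows into `c₂`, which agree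
after composing with `c₂ ⟶ x`. Since pulling back along an arrow preserves and reflects `⊂`,
the relation transports from one filling to the other through the refinement. Transitivity
only needs a square filling of the two legs into the middle object.
-/

open CategoryTheory

section MarkedArrows

variable {C : Type*} [Category C]

theorem exists_common_refinement_of_squares
    (hsq : ∀ {A B D : C} (x : A ⟶ D) (y : B ⟶ D),
      ∃ (P : C) (p : P ⟶ A) (q : P ⟶ B), p ≫ x = q ≫ y)
    (heq : ∀ {A B E : C} (f g : A ⟶ B) (h : B ⟶ E), f ≫ h = g ≫ h →
      ∃ (Z : C) (e : Z ⟶ A), e ≫ f = e ≫ g)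
    {x c₁ c₂ d d' : C} {α₁ : c₁ ⟶ x} {α₂ : c₂ ⟶ x}
    {β₁ : d ⟶ c₁} {β₂ : d ⟶ c₂} {γ₁ : d' ⟶ c₁} {γ₂ : d' ⟶ c₂}
    (hβ : β₁ ≫ α₁ = β₂ ≫ α₂) (hγ : γ₁ ≫ α₁ = γ₂ ≫ α₂) :
    ∃ (e : C) (δ : e ⟶ d) (ε : e ⟶ d'), δ ≫ β₁ = ε ≫ γ₁ ∧ δ ≫ β₂ = ε ≫ γ₂ := by
  obtain ⟨P, s, t, hst⟩ := hsq β₁ γ₁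
  have h₂ : (s ≫ β₂) ≫ α₂ = (t ≫ γ₂) ≫ α₂ := by
    simp only [Category.assoc, ← hβ, ← hγ, reassoc_of% hst]
  obtain ⟨e, u, hu⟩ := heq (s ≫ β₂) (t ≫ γ₂) α₂ h₂
  refine ⟨e, u ≫ s, u ≫ t, ?_, ?_⟩
  · simp only [Category.assoc, hst]
  · simpa only [Category.assoc] using hu

variable {M : C → Type*} (pull : ∀ {d c : C}, (d ⟶ c) → M c → M d)
  (rel : ∀ {c : C}, M c → M c → Prop)

theorem rel_pull_comp_iff
    (hfunc : ∀ {e d c : C} (β : e ⟶ d) (γ : d ⟶ c) (m : M c),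
      pull (β ≫ γ) m = pull β (pull γ m))
    (hiff : ∀ {d c : C} (β : d ⟶ c) (m₁ m₂ : M c),
      rel m₁ m₂ ↔ rel (pull β m₁) (pull β m₂))
    {e d c₁ c₂ : C} (δ : e ⟶ d) (β₁ : d ⟶ c₁) (β₂ : d ⟶ c₂) (m₁ : M c₁) (m₂ : M c₂) :
    rel (pull (δ ≫ β₁) m₁) (pull (δ ≫ β₂) m₂) ↔ rel (pull β₁ m₁) (pull β₂ m₂) := by
  rw [hfunc, hfunc]
  exact (hiff δ _ _).symm

/-- `(α₁, m₁) ⊂ (α₂, m₂)`, witnessed by some square filling of `(α₁, α₂)`. -/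
def IsMarkedSub {x c₁ c₂ : C} (p₁ : (c₁ ⟶ x) × M c₁) (p₂ : (c₂ ⟶ x) × M c₂) : Prop :=
  ∃ (d : C) (β₁ : d ⟶ c₁) (β₂ : d ⟶ c₂),
    β₁ ≫ p₁.1 = β₂ ≫ p₂.1 ∧ rel (pull β₁ p₁.2) (pull β₂ p₂.2)

theorem IsMarkedSub.rel_pull_of_comp_eq
    (hsq : ∀ {A B D : C} (x : A ⟶ D) (y : B ⟶ D),
      ∃ (P : C) (p : P ⟶ A) (q : P ⟶ B), p ≫ x = q ≫ y)
    (heq : ∀ {A B E : C} (f g : A ⟶ B) (h : B ⟶ E), f ≫ h = g ≫ h →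
      ∃ (Z : C) (e : Z ⟶ A), e ≫ f = e ≫ g)
    (hfunc : ∀ {e d c : C} (β : e ⟶ d) (γ : d ⟶ c) (m : M c),
      pull (β ≫ γ) m = pull β (pull γ m))
    (hiff : ∀ {d c : C} (β : d ⟶ c) (m₁ m₂ : M c),
      rel m₁ m₂ ↔ rel (pull β m₁) (pull β m₂))
    {x c₁ c₂ d : C} {p₁ : (c₁ ⟶ x) × M c₁} {p₂ : (c₂ ⟶ x) × M c₂}
    (h : IsMarkedSub pull rel p₁ p₂) (γ₁ : d ⟶ c₁) (γ₂ : d ⟶ c₂)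
    (hγ : γ₁ ≫ p₁.1 = γ₂ ≫ p₂.1) :
    rel (pull γ₁ p₁.2) (pull γ₂ p₂.2) := by
  obtain ⟨d', β₁, β₂, hβ, hrel⟩ := h
  obtain ⟨e, δ, ε, h₁, h₂⟩ := exists_common_refinement_of_squares hsq heq hβ hγ
  have hδ := (rel_pull_comp_iff pull rel hfunc hiff δ β₁ β₂ p₁.2 p₂.2).2 hrel
  rw [h₁, h₂] at hδ
  exact (rel_pull_comp_iff pull rel hfunc hiff ε γ₁ γ₂ p₁.2 p₂.2).1 hδ

theorem IsMarkedSub.refl (hrel_refl : ∀ {c : C} (m : M c), rel m m)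
    {x c : C} (p : (c ⟶ x) × M c) : IsMarkedSub pull rel p p :=
  ⟨c, 𝟙 c, 𝟙 c, rfl, hrel_refl _⟩

theorem IsMarkedSub.trans
    (hsq : ∀ {A B D : C} (x : A ⟶ D) (y : B ⟶ D),
      ∃ (P : C) (p : P ⟶ A) (q : P ⟶ B), p ≫ x = q ≫ y)
    (hrel_trans : ∀ {c : C} {m₁ m₂ m₃ : M c}, rel m₁ m₂ → rel m₂ m₃ → rel m₁ m₃)
    (hfunc : ∀ {e d c : C} (β : e ⟶ d) (γ : d ⟶ c) (m : M c),
      pull (β ≫ γ) m = pull β (pull γ m))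
    (hiff : ∀ {d c : C} (β : d ⟶ c) (m₁ m₂ : M c),
      rel m₁ m₂ ↔ rel (pull β m₁) (pull β m₂))
    {x c₁ c₂ c₃ : C} {p₁ : (c₁ ⟶ x) × M c₁} {p₂ : (c₂ ⟶ x) × M c₂} {p₃ : (c₃ ⟶ x) × M c₃}
    (h₁₂ : IsMarkedSub pull rel p₁ p₂) (h₂₃ : IsMarkedSub pull rel p₂ p₃) :
    IsMarkedSub pull rel p₁ p₃ := by
  obtain ⟨d, β₁, β₂, hβ, hrelβ⟩ := h₁₂
  obtain ⟨d', γ₂, γ₃, hγ, hrelγ⟩ := h₂₃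
  obtain ⟨e, s, t, hst⟩ := hsq β₂ γ₂
  refine ⟨e, s ≫ β₁, t ≫ γ₃, ?_, ?_⟩
  · simp only [Category.assoc, hβ, ← hγ, reassoc_of% hst]
  · have h₁ := (rel_pull_comp_iff pull rel hfunc hiff s β₁ β₂ p₁.2 p₂.2).2 hrelβ
    have h₂ := (rel_pull_comp_iff pull rel hfunc hiff t γ₂ γ₃ p₂.2 p₃.2).2 hrelγ
    rw [hst] at h₁
    exact hrel_trans h₁ h₂

end MarkedArrows

/-- for marked arrows over a fixed object `x` in a category with
calculus of fractions, with a functorial marking pull-back preserving and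
reflecting a preorder on markings: (a) if some square filling witnesses the
relation `(α₁, m₁) ⊂ (α₂, m₂)`, then every square filling does; (b) the
relation on marked arrows is reflexive and transitive. -/
theorem marked_arrows_preorder {C : Type*} [Category C]
    -- calculus of fractions
    (hsq : ∀ {A B D : C} (x : A ⟶ D) (y : B ⟶ D),
      ∃ (P : C) (p : P ⟶ A) (q : P ⟶ B), p ≫ x = q ≫ y)
    (heq : ∀ {A B E : C} (f g : A ⟶ B) (h : B ⟶ E), f ≫ h = g ≫ h →
      ∃ (Z : C) (e : Z ⟶ A), e ≫ f = e ≫ g)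
    -- markings and their pull-back
    (M : C → Type*)
    (pull : ∀ {d c : C}, (d ⟶ c) → M c → M d)
    (rel : ∀ {c : C}, M c → M c → Prop)
    (hrel_refl : ∀ {c : C} (m : M c), rel m m)
    (hrel_trans : ∀ {c : C} {m₁ m₂ m₃ : M c}, rel m₁ m₂ → rel m₂ m₃ → rel m₁ m₃)
    (hfunc : ∀ {e d c : C} (β : e ⟶ d) (γ : d ⟶ c) (m : M c),
      pull (β ≫ γ) m = pull β (pull γ m))
    (hiff : ∀ {d c : C} (β : d ⟶ c) (m₁ m₂ : M c),
      rel m₁ m₂ ↔ rel (pull β m₁) (pull β m₂))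
    -- the base object
    (x : C) :
    -- the subset relation on marked arrows over x
    let Sub : ∀ {c₁ c₂ : C}, (c₁ ⟶ x) × M c₁ → (c₂ ⟶ x) × M c₂ → Prop :=
      fun {c₁ c₂} p₁ p₂ =>
        ∃ (d : C) (β₁ : d ⟶ c₁) (β₂ : d ⟶ c₂),
          β₁ ≫ p₁.1 = β₂ ≫ p₂.1 ∧ rel (pull β₁ p₁.2) (pull β₂ p₂.2)
    -- (a) independence of the square filling
    (∀ {c₁ c₂ : C} (p₁ : (c₁ ⟶ x) × M c₁) (p₂ : (c₂ ⟶ x) × M c₂),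
      Sub p₁ p₂ → ∀ {d : C} (γ₁ : d ⟶ c₁) (γ₂ : d ⟶ c₂),
        γ₁ ≫ p₁.1 = γ₂ ≫ p₂.1 → rel (pull γ₁ p₁.2) (pull γ₂ p₂.2)) ∧
    -- (b) reflexivity
    (∀ {c : C} (p : (c ⟶ x) × M c), Sub p p) ∧
    -- (b) transitivity
    (∀ {c₁ c₂ c₃ : C} (p₁ : (c₁ ⟶ x) × M c₁) (p₂ : (c₂ ⟶ x) × M c₂)
      (p₃ : (c₃ ⟶ x) × M c₃), Sub p₁ p₂ → Sub p₂ p₃ → Sub p₁ p₃) := by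
  intro Sub
  exact ⟨fun _ _ h _ γ₁ γ₂ hγ =>
      IsMarkedSub.rel_pull_of_comp_eq pull rel hsq heq hfunc hiff h γ₁ γ₂ hγ,
    IsMarkedSub.refl pull rel hrel_refl,
    fun _ _ _ h₁₂ h₂₃ => IsMarkedSub.trans pull rel hsq hrel_trans hfunc hiff h₁₂ h₂₃⟩
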